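/- LRW resampling invariance on transcript points (Proposition 8 of the paper): Fix additionally a tweak τ_{j+1} ∈ 𝒯 and x_{j+1} ∈ V with x_{j+1} ⊕ h(τ_{j+1}) ∉ {x₁ ⊕ h(τ₁), …, x_j ⊕ h(τ_j)}, and s ∈ V with s ∉ {x₁ ⊕ h(τ₁), …, x_j ⊕ h(τ_j)}. Let E' = E ∘ swap(x_{j+1} ⊕ h(τ_{j+1}), s), and define E'^{T_r} (0 ≤ r ≤ j) by the same recursion with E replaced by E'. Then for all i with 1 ≤ i ≤ j and all r with 0 ≤ r ≤ j, E'^{T_r}(x_i ⊕ h(τ_i)) = E^{T_r}(x_i ⊕ h(τ_i)). -/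
import Mathlib


/-- The reprogrammed permutations `E^{T_i}` of the LRW hybrid argument:
`E^{T_0} = E` and
`E^{T_i} = swap(E^{T_{i-1}}(x_i ⊕ h(τ_i)), y_i ⊕ h(τ_i)) ∘ E^{T_{i-1}}`. -/
def lrwReprog {V 𝒯 : Type*} [DecidableEq V] [Add V]
    (E : Equiv.Perm V) (h : 𝒯 → V) (τ : ℕ → 𝒯) (x y : ℕ → V) : ℕ → Equiv.Perm V
  | 0 => E
  | i + 1 =>
      Equiv.swap (lrwReprog E h τ x y i (x (i + 1) + h (τ (i + 1))))
          (y (i + 1) + h (τ (i + 1))) *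
        lrwReprog E h τ x y i

/-- LRW resampling invariance on transcript points (Proposition 8): with
`E' = E ∘ swap(x_{j+1} ⊕ h(τ_{j+1}), s)`, for `x_{j+1} ⊕ h(τ_{j+1})` and `s`
outside `{x₁ ⊕ h(τ₁), …, x_j ⊕ h(τ_j)}`, the reprogrammed ciphers built from `E'`
and from `E` agree on all transcript points `x_i ⊕ h(τ_i)`, at every stage `r ≤ j`. -/
theorem lrw_resampling_invariance {n j : ℕ} (hn : 1 ≤ n) {𝒯 : Type*}
    (E : Equiv.Perm (Fin n → ZMod 2)) (h : 𝒯 → Fin n → ZMod 2)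
    (τ : ℕ → 𝒯) (x y : ℕ → Fin n → ZMod 2) (s : Fin n → ZMod 2)
    (hxj : ∀ i, 1 ≤ i → i ≤ j → x (j + 1) + h (τ (j + 1)) ≠ x i + h (τ i))
    (hs : ∀ i, 1 ≤ i → i ≤ j → s ≠ x i + h (τ i)) :
    ∀ i r, 1 ≤ i → i ≤ j → r ≤ j →
      lrwReprog (E * Equiv.swap (x (j + 1) + h (τ (j + 1))) s) h τ x y r
          (x i + h (τ i)) =
        lrwReprog E h τ x y r (x i + h (τ i)) := by
  intro i r
  induction r generalizing i with
  | zero =>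
    intro h1 h2 _
    simp only [lrwReprog, Equiv.Perm.mul_apply]
    rw [Equiv.swap_apply_of_ne_of_ne (fun e => hxj i h1 h2 e.symm)
      (fun e => hs i h1 h2 e.symm)]
  | succ r ih =>
    intro h1 h2 hr
    have hr' : r ≤ j := Nat.le_of_succ_le hr
    simp only [lrwReprog, Equiv.Perm.mul_apply]
    rw [ih (r + 1) (Nat.le_add_left 1 r) hr hr', ih i h1 h2 hr']
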